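/- Under the hypotheses of the reduction theorem, if in addition f̄ : ℝ → ℝ is strictly convex and the quadratic problem over C has a unique minimizer, then for variables in ℝⁿ the unique minimizer of ∑ᵢ aᵢ·f̄(xᵢ/aᵢ + bᵢ) over C coincides with the minimizer of ∑ᵢ aᵢ·f(xᵢ/aᵢ + bᵢ) over C for any convex f: the minimizer of the strictly convex (a,b,f̄)-separable problem is also a minimizer of the (a,b,f)-separable problem. -/

import Mathlib

/-- Left derivative of `g` at `x`. -/
noncomputable def leftDeriv (g : ℝ → ℝ) (x : ℝ) : ℝ := derivWithin g (Set.Iio x) x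

/-- Right derivative of `g` at `x`. -/
noncomputable def rightDeriv (g : ℝ → ℝ) (x : ℝ) : ℝ := derivWithin g (Set.Ioi x) x

/-- `(i,k)` is an exchangeable pair at `x ∈ C`. -/
def ExchPair {n : ℕ} (C : Set (Fin n → ℝ)) (x : Fin n → ℝ) (i k : Fin n) : Prop :=
  i ≠ k ∧ ∃ ε : ℝ, 0 < ε ∧ x + ε • (Pi.single k 1 - Pi.single i 1) ∈ C

/-! Strict convexity of `fbar` makes its one-sided derivatives strictly increasing across distinct
points, so the exchange condition for `fbar` at `x` forces `x i / a i + b i ≤ x k / a k + b k` for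
every exchangeable pair `(i, k)`. The one-sided derivatives of the convex `f` are monotone, so the
exchange condition for `f` follows, and with it optimality for `f`. -/

open Set

variable {g : ℝ → ℝ}

lemma ConvexOn.const_mul_comp_div_add (hg : ConvexOn ℝ univ g) {c : ℝ} (hc : 0 ≤ c) (d : ℝ) :
    ConvexOn ℝ univ (fun t => c * g (t / c + d)) := by
  simpa [Function.comp_def, div_eq_inv_mul, add_comm] using
    ((hg.translate_right d).comp_linearMap (LinearMap.lsmul ℝ ℝ c⁻¹)).smul hc

lemma derivWithin_const_mul_comp_div_add {S T : Set ℝ} {c : ℝ} (hc : c ≠ 0) {d s : ℝ}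
    (hST : MapsTo (fun t => t / c + d) S T) (hS : UniqueDiffWithinAt ℝ S s)
    (hg : DifferentiableWithinAt ℝ g T (s / c + d)) :
    derivWithin (fun t => c * g (t / c + d)) S s = derivWithin g T (s / c + d) := by
  have hinner : HasDerivWithinAt (fun t => t / c + d) (1 / c) S s :=
    (((hasDerivAt_id s).div_const c).add_const d).hasDerivWithinAt
  have hcomp : HasDerivWithinAt (fun t => c * g (t / c + d))
      (c * ((1 / c) • derivWithin g T (s / c + d))) S s :=
    (hg.hasDerivWithinAt.scomp s hinner hST).const_mul c
  rw [hcomp.derivWithin hS, smul_eq_mul, one_div, mul_inv_cancel_left₀ hc]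

lemma leftDeriv_const_mul_comp_div_add {c : ℝ} (hc : 0 < c) (d s : ℝ)
    (hg : DifferentiableWithinAt ℝ g (Iio (s / c + d)) (s / c + d)) :
    leftDeriv (fun t => c * g (t / c + d)) s = leftDeriv g (s / c + d) :=
  derivWithin_const_mul_comp_div_add hc.ne'
    (fun t (ht : t < s) => show t / c + d < s / c + d by gcongr) (uniqueDiffWithinAt_Iio s) hg

lemma rightDeriv_const_mul_comp_div_add {c : ℝ} (hc : 0 < c) (d s : ℝ)
    (hg : DifferentiableWithinAt ℝ g (Ioi (s / c + d)) (s / c + d)) :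
    rightDeriv (fun t => c * g (t / c + d)) s = rightDeriv g (s / c + d) :=
  derivWithin_const_mul_comp_div_add hc.ne'
    (fun t (ht : s < t) => show s / c + d < t / c + d by gcongr) (uniqueDiffWithinAt_Ioi s) hg

lemma ConvexOn.differentiableWithinAt_Iio (hg : ConvexOn ℝ univ g) (u : ℝ) :
    DifferentiableWithinAt ℝ g (Iio u) u :=
  hg.differentiableWithinAt_Iio_of_mem_interior (by simp)

lemma ConvexOn.differentiableWithinAt_Ioi (hg : ConvexOn ℝ univ g) (u : ℝ) :
    DifferentiableWithinAt ℝ g (Ioi u) u :=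
  hg.differentiableWithinAt_Ioi_of_mem_interior (by simp)

lemma ConvexOn.leftDeriv_le_rightDeriv_of_le (hg : ConvexOn ℝ univ g) {u v : ℝ} (huv : u ≤ v) :
    leftDeriv g u ≤ rightDeriv g v :=
  (hg.leftDeriv_le_rightDeriv_of_mem_interior (by simp)).trans
    (hg.monotoneOn_rightDeriv (by simp) (by simp) huv)

lemma StrictConvexOn.le_of_leftDeriv_le_rightDeriv (hg : StrictConvexOn ℝ univ g) {u v : ℝ}
    (h : leftDeriv g u ≤ rightDeriv g v) : u ≤ v := by
  by_contra! hvu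
  have hright : rightDeriv g v < slope g v u :=
    hg.rightDeriv_lt_slope (mem_univ v) (mem_univ u) hvu (hg.convexOn.differentiableWithinAt_Ioi v)
  have hleft : slope g v u ≤ leftDeriv g u :=
    hg.convexOn.slope_le_leftDeriv (mem_univ v) (mem_univ u) hvu
      (hg.convexOn.differentiableWithinAt_Iio u)
  exact (hright.trans_le hleft).not_ge h

theorem strictly_convex_equivalence_general {n : ℕ} (C : Set (Fin n → ℝ))
    (a b : Fin n → ℝ) (ha : ∀ i, 0 < a i)
    (f fbar : ℝ → ℝ) (hf : ConvexOn ℝ Set.univ f)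
    (hfbar : StrictConvexOn ℝ Set.univ fbar)
    -- the exchange optimality condition holds for every separable convex objective over C
    (hcond : ∀ φ : Fin n → ℝ → ℝ, (∀ i, ConvexOn ℝ Set.univ (φ i)) →
      ∀ x ∈ C, (IsMinOn (fun y => ∑ i, φ i (y i)) C x ↔
        ∀ i k, ExchPair C x i k → leftDeriv (φ i) (x i) ≤ rightDeriv (φ k) (x k)))
    (x : Fin n → ℝ) (hx : x ∈ C)
    (hxbar : IsMinOn (fun y => ∑ i, a i * fbar (y i / a i + b i)) C x) :
    IsMinOn (fun y => ∑ i, a i * f (y i / a i + b i)) C x := by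
  set φ : (ℝ → ℝ) → Fin n → ℝ → ℝ := fun g i t => a i * g (t / a i + b i)
  have hφ : ∀ g : ℝ → ℝ, ConvexOn ℝ univ g → ∀ i, ConvexOn ℝ univ (φ g i) :=
    fun g hg i => hg.const_mul_comp_div_add (ha i).le (b i)
  have hexch_bar := (hcond (φ fbar) (hφ fbar hfbar.convexOn) x hx).mp hxbar
  refine (hcond (φ f) (hφ f hf) x hx).mpr fun i k hik => ?_
  have hbar := hexch_bar i k hik
  simp only [φ, leftDeriv_const_mul_comp_div_add (ha i), rightDeriv_const_mul_comp_div_add (ha k),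
    hf.differentiableWithinAt_Iio, hf.differentiableWithinAt_Ioi,
    hfbar.convexOn.differentiableWithinAt_Iio, hfbar.convexOn.differentiableWithinAt_Ioi] at hbar ⊢
  exact hf.leftDeriv_le_rightDeriv_of_le (hfbar.le_of_leftDeriv_le_rightDeriv hbar)

theorem strictly_convex_equivalence {n : ℕ} (C : Set (Fin n → ℝ)) (hC : C.Nonempty)
    (hCconv : Convex ℝ C)
    (a b : Fin n → ℝ) (ha : ∀ i, 0 < a i)
    (f fbar : ℝ → ℝ) (hf : ConvexOn ℝ Set.univ f)
    (hfbar : StrictConvexOn ℝ Set.univ fbar)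
    -- the exchange optimality condition holds for every separable convex objective over C
    (hcond : ∀ φ : Fin n → ℝ → ℝ, (∀ i, ConvexOn ℝ Set.univ (φ i)) →
      ∀ x ∈ C, (IsMinOn (fun y => ∑ i, φ i (y i)) C x ↔
        ∀ i k, ExchPair C x i k → leftDeriv (φ i) (x i) ≤ rightDeriv (φ k) (x k)))
    -- the quadratic problem over C has a unique minimizer
    (huniq : ∃! x : Fin n → ℝ, x ∈ C ∧
      IsMinOn (fun y => ∑ i, a i * ((1 : ℝ) / 2 * (y i / a i + b i) ^ 2)) C x)
    (x : Fin n → ℝ) (hx : x ∈ C)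
    (hxbar : IsMinOn (fun y => ∑ i, a i * fbar (y i / a i + b i)) C x) :
    IsMinOn (fun y => ∑ i, a i * f (y i / a i + b i)) C x :=
  strictly_convex_equivalence_general C a b ha f fbar hf hfbar hcond x hx hxbar
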